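/- The following are equivalent: (1) 2^ℵ0 > ℵ1; (2) for every ℵ0-coloring of the real numbers, there exist four pairwise distinct reals e1, e2, e3, e4 of the same color such that e1 + e2 = e3 + e4. -/

import Mathlib

/-!
If `ℵ₁ < 2^ℵ₀`, fix `T ⊆ ℝ` with `#T = ℵ₁`. For every `v` the coloring `x ↦ c (v + x)` is not
injective on the uncountable set `T`, giving `x₁ ≠ x₂` in `T` with `c (v + x₁) = c (v + x₂)`.
The data `(x₁, x₂, c (v + x₁))` range over a set of size `ℵ₁ < 2^ℵ₀`, so they are shared by
infinitely many `v`; two suitable ones, `v` and `w`, span the monochromatic rectangle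
`v + x₁, w + x₂, v + x₂, w + x₁`.

Under CH, `ℝ` is the union of an increasing `ω₁`-chain of countable subgroups `V i`. Let `lvl x`
be the least `i` with `x ∈ V i` and color `x` so that `x ↦ (lvl x, c x)` is injective. In a
monochromatic solution of `e₁ + e₂ = e₃ + e₄` the four levels are then distinct, yet each `eᵢ`
lies in the subgroup generated by the other three, so its level is at most the largest of
theirs; this fails for the `eᵢ` of largest level.
-/

open Cardinal Set Function

universe u

def HasMonochromaticAdditiveQuadruple {G κ : Type*} [Add G] (c : G → κ) : Prop :=
  ∃ e1 e2 e3 e4 : G,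
    e1 ≠ e2 ∧ e1 ≠ e3 ∧ e1 ≠ e4 ∧ e2 ≠ e3 ∧ e2 ≠ e4 ∧ e3 ≠ e4 ∧
    c e1 = c e2 ∧ c e2 = c e3 ∧ c e3 = c e4 ∧ e1 + e2 = e3 + e4

theorem hasMonochromaticAdditiveQuadruple_of_rectangle {G κ : Type*} [AddCommGroup G]
    {c : G → κ} {v w x₁ x₂ : G} (hx : x₁ ≠ x₂) (hvw : v ≠ w) (h₁ : w - v ≠ x₁ - x₂)
    (h₂ : w - v ≠ x₂ - x₁) (hv : c (v + x₁) = c (v + x₂)) (hw : c (w + x₁) = c (w + x₂))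
    (hx₁ : c (v + x₁) = c (w + x₁)) :
    HasMonochromaticAdditiveQuadruple c := by
  refine ⟨v + x₁, w + x₂, v + x₂, w + x₁, ?_, ?_, ?_, ?_, ?_, ?_,
    hx₁.trans hw, hw.symm.trans (hx₁.symm.trans hv), hv.symm.trans hx₁, by abel⟩ <;> grind

theorem hasMonochromaticAdditiveQuadruple_of_aleph_one_lt {G κ : Type u} [AddCommGroup G]
    [Countable κ] (hG : ℵ₁ < #G) (c : G → κ) : HasMonochromaticAdditiveQuadruple c := by
  obtain ⟨T, hT⟩ := le_mk_iff_exists_set.mp hG.le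
  have : Uncountable T := aleph0_lt_mk_iff.mp (hT ▸ aleph0_lt_aleph_one)
  have : Uncountable G := aleph0_lt_mk_iff.mp (aleph0_lt_aleph_one.trans hG)
  choose x₁ x₂ hc hne using fun v : G =>
    not_injective_iff.mp (not_injective_uncountable_countable fun x : T => c (v + x))
  have hcard : #(T × T × κ) < #G :=
    calc #(T × T × κ) = ℵ₁ * (ℵ₁ * #κ) := by simp [hT]
      _ ≤ ℵ₁ * (ℵ₁ * ℵ₀) := by gcongr; exact mk_le_aleph0
      _ = ℵ₁ := by rw [mul_aleph0_eq (aleph0_le_aleph 1), mul_eq_self (aleph0_le_aleph 1)]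
      _ < #G := hG
  obtain ⟨⟨y₁, y₂, k⟩, hfib⟩ := exists_infinite_fiber (fun v => (x₁ v, x₂ v, c (v + x₁ v))) hcard
  have hF := infinite_coe_iff.mp hfib
  obtain ⟨v, hv⟩ := hF.nonempty
  obtain ⟨w, hw, hwv⟩ := (hF.sdiff (toFinite {v, v + (y₁ - y₂), v + (y₂ - y₁)})).nonempty
  simp only [mem_preimage, mem_singleton_iff, Prod.mk.injEq] at hv hw
  simp only [mem_insert_iff, mem_singleton_iff, not_or] at hwv
  obtain ⟨rfl, rfl, hvk⟩ := hv
  obtain ⟨hw₁, hw₂, hwk⟩ := hw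
  obtain ⟨hwv, hw₁₂, hw₂₁⟩ := hwv
  refine hasMonochromaticAdditiveQuadruple_of_rectangle (fun h => hne v (Subtype.ext h))
    (Ne.symm hwv) (fun h => hw₁₂ (by rw [← h]; abel)) (fun h => hw₂₁ (by rw [← h]; abel))
    (hc v) ?_ ?_
  · rw [← hw₁, ← hw₂]
    exact hc w
  · rw [hvk, ← hwk, hw₁]

theorem countable_addSubgroupClosure {G : Type*} [AddCommGroup G] {s : Set G}
    (hs : s.Countable) : (AddSubgroup.closure s : Set G).Countable := by
  have := hs.to_subtype
  rw [← Submodule.span_int_eq_addSubgroupClosure, Submodule.coe_toAddSubgroup,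
    ← Subtype.range_coe (s := s)]
  exact countable_coe_iff.mp
    (inferInstanceAs (Countable (Submodule.span ℤ (range ((↑) : s → G)))))

theorem exists_countable_addSubgroup_chain {G : Type u} [AddCommGroup G] (hG : #G ≤ ℵ₁) :
    ∃ V : (ℵ₁ : Cardinal.{u}).ord.ToType → AddSubgroup G,
      Monotone V ∧ (∀ i, (V i : Set G).Countable) ∧ ∀ x, ∃ i, x ∈ V i := by
  obtain ⟨e⟩ : Nonempty (G ↪ (ℵ₁ : Cardinal.{u}).ord.ToType) := by
    rwa [← le_def, mk_ord_toType]
  refine ⟨fun i => AddSubgroup.closure (e ⁻¹' Iic i),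
    fun i j hij => AddSubgroup.closure_mono (preimage_mono (Iic_subset_Iic.mpr hij)),
    fun i => countable_addSubgroupClosure ?_,
    fun x => ⟨e x, AddSubgroup.subset_closure (le_refl (e x))⟩⟩
  have hIio : (Iio i).Countable :=
    le_aleph0_iff_set_countable.mp (lt_aleph_one_iff.mp (by simpa using mk_Iio_lt i))
  exact (Iio_insert (a := i) ▸ hIio.insert i).preimage e.injective

theorem exists_forall_le_iff_mem_of_monotone {α ι : Type*} [LinearOrder ι] [WellFoundedLT ι]
    {V : ι → Set α} (hV : Monotone V) (hcover : ∀ x, ∃ i, x ∈ V i) :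
    ∃ lvl : α → ι, ∀ x i, lvl x ≤ i ↔ x ∈ V i := by
  refine ⟨fun x => wellFounded_lt.min {i | x ∈ V i} (hcover x),
    fun x i => ⟨fun h => ?_, fun h => ?_⟩⟩
  · exact hV h (wellFounded_lt.min_mem {i | x ∈ V i} (hcover x))
  · exact not_lt.mp (wellFounded_lt.not_lt_min {i | x ∈ V i} h)

theorem exists_injective_prodMk_of_countable_fibers {α ι : Type*} (f : α → ι)
    (hf : ∀ i, (f ⁻¹' {i}).Countable) : ∃ c : α → ℕ, Injective fun x => (f x, c x) := by
  choose g hg using fun i => countable_iff_exists_injOn.mp (hf i)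
  refine ⟨fun x => g (f x) x, fun x y hxy => ?_⟩
  simp only [Prod.mk.injEq] at hxy
  obtain ⟨hfxy, hgxy⟩ := hxy
  rw [hfxy] at hgxy
  exact hg (f y) hfxy rfl hgxy

section Level

variable {G ι : Type*} [AddCommGroup G] [LinearOrder ι] {V : ι → AddSubgroup G} {lvl : G → ι}

theorem level_le_max_of_add_eq_add (hlvl : ∀ x i, lvl x ≤ i ↔ x ∈ V i) {a b c d : G}
    (h : a + b = c + d) : lvl a ≤ max (lvl b) (max (lvl c) (lvl d)) := by
  have mem_max {x : G} (hx : lvl x ≤ max (lvl b) (max (lvl c) (lvl d))) := (hlvl _ _).mp hx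
  rw [hlvl, eq_sub_of_add_eq h]
  exact sub_mem (add_mem (mem_max (by simp)) (mem_max (by simp))) (mem_max (by simp))

theorem not_hasMonochromaticAdditiveQuadruple_of_level {κ : Type*}
    (hlvl : ∀ x i, lvl x ≤ i ↔ x ∈ V i) {c : G → κ} (hc : Injective fun x => (lvl x, c x)) :
    ¬ HasMonochromaticAdditiveQuadruple c := by
  rintro ⟨e₁, e₂, e₃, e₄, h₁₂, h₁₃, h₁₄, h₂₃, h₂₄, h₃₄, c₁₂, c₂₃, c₃₄, hsum⟩
  have lvl_ne {x y : G} (hxy : x ≠ y) (hcxy : c x = c y) : lvl x ≠ lvl y :=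
    fun h => hxy (hc (Prod.ext h hcxy))
  have := level_le_max_of_add_eq_add hlvl hsum
  have := level_le_max_of_add_eq_add hlvl ((add_comm e₂ e₁).trans hsum)
  have := level_le_max_of_add_eq_add hlvl hsum.symm
  have := level_le_max_of_add_eq_add hlvl ((add_comm e₄ e₃).trans hsum.symm)
  have := lvl_ne h₁₂ c₁₂
  have := lvl_ne h₁₃ (c₁₂.trans c₂₃)
  have := lvl_ne h₁₄ (c₁₂.trans (c₂₃.trans c₃₄))
  have := lvl_ne h₂₃ c₂₃
  have := lvl_ne h₂₄ (c₂₃.trans c₃₄)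
  have := lvl_ne h₃₄ c₃₄
  grind

end Level

theorem exists_not_hasMonochromaticAdditiveQuadruple {G : Type u} [AddCommGroup G]
    (hG : #G ≤ ℵ₁) : ∃ c : G → ℕ, ¬ HasMonochromaticAdditiveQuadruple c := by
  obtain ⟨V, hV, hcount, hcover⟩ := exists_countable_addSubgroup_chain hG
  obtain ⟨lvl, hlvl⟩ :=
    exists_forall_le_iff_mem_of_monotone (V := fun i => (V i : Set G)) (fun _ _ h => hV h) hcover
  obtain ⟨c, hc⟩ := exists_injective_prodMk_of_countable_fibers lvl
    fun i => (hcount i).mono fun x hx => (hlvl x i).mp (le_of_eq hx)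
  exact ⟨c, not_hasMonochromaticAdditiveQuadruple_of_level hlvl hc⟩

theorem aleph_one_lt_two_pow_aleph0_iff : aleph.{u} 1 < 2 ^ ℵ₀ ↔ ℵ₁ < #ℝ := by
  rw [two_power_aleph0, mk_real]
  conv_rhs => rw [← lift_lt.{0, u}, lift_aleph, lift_continuum, Ordinal.lift_one]

/-- `2^ℵ₀ > ℵ₁` iff every `ℵ₀`-coloring of `ℝ` admits four pairwise distinct
monochromatic reals with `e1 + e2 = e3 + e4`. -/
theorem S_iff_not_CH :
    Cardinal.aleph 1 < (2 : Cardinal) ^ Cardinal.aleph0 ↔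
    ∀ COL : ℝ → ℕ,
      ∃ e1 e2 e3 e4 : ℝ,
        e1 ≠ e2 ∧ e1 ≠ e3 ∧ e1 ≠ e4 ∧ e2 ≠ e3 ∧ e2 ≠ e4 ∧ e3 ≠ e4 ∧
        COL e1 = COL e2 ∧ COL e2 = COL e3 ∧ COL e3 = COL e4 ∧
        e1 + e2 = e3 + e4 := by
  rw [aleph_one_lt_two_pow_aleph0_iff]
  refine ⟨fun h COL => hasMonochromaticAdditiveQuadruple_of_aleph_one_lt h COL, fun h => ?_⟩
  by_contra hCH
  obtain ⟨COL, hCOL⟩ := exists_not_hasMonochromaticAdditiveQuadruple (not_lt.mp hCH)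
  exact hCOL (h COL)
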